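/- Let A, B be closed subsets of ℝ³ that are unions of closed dyadic-type cubes, and suppose trees Sₙ converge to S in Hausdorff distance with dₙ := d_H(Sₙ, S) → 0. Fix u ∈ ℕ and let 𝒞ₙ be the collection of cubes C of side 2^{−u} (vertices in 2^{−u}(ℤ³+1/2)) with dist(C, Sₙ) ≤ min{2^{−2u}, 2dₙ}, and 𝒞 the collection of such cubes with C ∩ S ≠ ∅, with Aₙ = ⋃𝒞ₙ and A = ⋃𝒞 the corresponding dyadic approximations, restricted to a fixed bounded box. Then: (a) Sₙ ⊆ Aₙ and d_H(Aₙ, Sₙ) ≤ 2^{−(u−2)} for n large; (b) the sequence (Aₙ)ₙ is eventually constant, equal to A. -/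

import Mathlib

/-!
Part (a) is local: every point lies in some cube, which passes the tolerance test, and a point
of a cube that passes is within the tolerance plus the cube's diameter of `Sₙ`.

For (b), the cubes form a locally finite family, so the union of those missing `S` is closed
and, `S` being compact, at some positive distance `δ` from `S`. Once `dₙ ≤ 2^{-2u}` and
`3 dₙ < δ`, a cube within `2 dₙ` of `Sₙ` is within `3 dₙ` of `S`, hence meets `S`; conversely
a cube meeting `S` is within `dₙ` of `Sₙ`.
-/

open Filter Set Metric

noncomputable section

/-- The closed dyadic cube at scale `u` indexed by `z ∈ ℤ³`: side length `2^{−u}`, with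
vertices in `2^{−u}(ℤ³ + 1/2)`. -/
def dyCube (u : ℕ) (z : Fin 3 → ℤ) : Set (EuclideanSpace ℝ (Fin 3)) :=
  {p | ∀ k, ((z k : ℝ) + 1 / 2) * (2 : ℝ) ^ (-(u : ℤ)) ≤ p k ∧
    p k ≤ ((z k : ℝ) + 3 / 2) * (2 : ℝ) ^ (-(u : ℤ))}

/-- The dyadic approximation at scale `u` of a set `S`, at tolerance `r`: the union of all
scale-`u` cubes within distance `r` of `S`. -/
def dyApprox (u : ℕ) (S : Set (EuclideanSpace ℝ (Fin 3))) (r : ℝ) :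
    Set (EuclideanSpace ℝ (Fin 3)) :=
  ⋃ z ∈ {z : Fin 3 → ℤ | ∃ p ∈ dyCube u z, Metric.infDist p S ≤ r}, dyCube u z

/-- The limiting dyadic approximation: the union of all scale-`u` cubes meeting `S`. -/
def dyApproxLimit (u : ℕ) (S : Set (EuclideanSpace ℝ (Fin 3))) :
    Set (EuclideanSpace ℝ (Fin 3)) :=
  ⋃ z ∈ {z : Fin 3 → ℤ | (dyCube u z ∩ S).Nonempty}, dyCube u z

lemma two_pow_mul_two_zpow_neg (u : ℕ) : (2 : ℝ) ^ u * 2 ^ (-(u : ℤ)) = 1 := by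
  rw [zpow_neg, zpow_natCast, mul_inv_cancel₀ (by positivity)]

lemma mem_dyCube_floor (u : ℕ) (x : EuclideanSpace ℝ (Fin 3)) :
    x ∈ dyCube u (fun k => ⌊x k * 2 ^ u - 1 / 2⌋) := by
  intro k
  have hε : (0 : ℝ) < 2 ^ (-(u : ℤ)) := by positivity
  have hx : x k * 2 ^ u * 2 ^ (-(u : ℤ)) = x k := by
    rw [mul_assoc, two_pow_mul_two_zpow_neg, mul_one]
  have h1 := mul_le_mul_of_nonneg_right (Int.floor_le (x k * 2 ^ u - 1 / 2)) hε.le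
  have h2 := mul_le_mul_of_nonneg_right (Int.lt_floor_add_one (x k * 2 ^ u - 1 / 2)).le hε.le
  constructor <;> nlinarith

lemma dist_le_of_mem_dyCube {u : ℕ} {z : Fin 3 → ℤ} {p q : EuclideanSpace ℝ (Fin 3)}
    (hp : p ∈ dyCube u z) (hq : q ∈ dyCube u z) : dist p q ≤ 2 * 2 ^ (-(u : ℤ)) := by
  have hcoord : ∀ k, dist (p k) (q k) ^ 2 ≤ (2 ^ (-(u : ℤ)) : ℝ) ^ 2 := fun k => by
    rw [Real.dist_eq, sq_abs]
    nlinarith [hp k, hq k]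
  rw [EuclideanSpace.dist_eq, Real.sqrt_le_left (by positivity), Fin.sum_univ_three]
  nlinarith [hcoord 0, hcoord 1, hcoord 2]

lemma abs_le_of_mem_dyCube {u : ℕ} {z : Fin 3 → ℤ} {p : EuclideanSpace ℝ (Fin 3)}
    (hp : p ∈ dyCube u z) (k : Fin 3) : |(z k : ℝ)| ≤ |p k| * 2 ^ u + 3 / 2 := by
  have h2u : (0 : ℝ) ≤ 2 ^ u := by positivity
  have hlo := mul_le_mul_of_nonneg_left (hp k).1 h2u
  have hhi := mul_le_mul_of_nonneg_left (hp k).2 h2u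
  rw [mul_left_comm, two_pow_mul_two_zpow_neg, mul_one] at hlo hhi
  rw [abs_le]
  constructor <;> nlinarith [le_abs_self (p k), neg_abs_le (p k)]

lemma finite_setOf_dyCube_inter_nonempty (u : ℕ) {s : Set (EuclideanSpace ℝ (Fin 3))}
    (hs : Bornology.IsBounded s) : {z | (dyCube u z ∩ s).Nonempty}.Finite := by
  obtain ⟨R, hR⟩ := hs.subset_closedBall 0
  set M : ℤ := ⌈R * 2 ^ u⌉ + 2
  refine (Set.finite_Icc (fun _ => -M) (fun _ => M)).subset ?_
  rintro z ⟨p, hpC, hps⟩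
  suffices h : ∀ k, |(z k : ℝ)| ≤ M from
    ⟨fun k => by exact_mod_cast (abs_le.mp (h k)).1,
      fun k => by exact_mod_cast (abs_le.mp (h k)).2⟩
  intro k
  have hpR : |p k| ≤ R :=
    (PiLp.norm_apply_le p k).trans (mem_closedBall_zero_iff.mp (hR hps))
  have hM : R * 2 ^ u ≤ M - 2 := by simp [M, Int.le_ceil]
  have := mul_le_mul_of_nonneg_right hpR (by positivity : (0 : ℝ) ≤ 2 ^ u)
  linarith [abs_le_of_mem_dyCube hpC k]

lemma isClosed_dyCube (u : ℕ) (z : Fin 3 → ℤ) : IsClosed (dyCube u z) := by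
  simp only [dyCube, Set.ofPred_forall, Set.ofPred_and]
  exact isClosed_iInter fun k =>
    (isClosed_le continuous_const (by fun_prop)).inter (isClosed_le (by fun_prop) continuous_const)

lemma locallyFinite_dyCube (u : ℕ) : LocallyFinite (dyCube u) := fun x =>
  ⟨ball x 1, ball_mem_nhds x one_pos, finite_setOf_dyCube_inter_nonempty u isBounded_ball⟩

lemma isClosed_biUnion_dyCube (u : ℕ) (T : Set (Fin 3 → ℤ)) :
    IsClosed (⋃ z ∈ T, dyCube u z) := by
  rw [biUnion_eq_iUnion]
  exact ((locallyFinite_dyCube u).comp_injective Subtype.val_injective).isClosed_iUnion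
    fun z => isClosed_dyCube u z

lemma exists_pos_le_infDist_of_disjoint_dyCube (u : ℕ) {S : Set (EuclideanSpace ℝ (Fin 3))}
    (hS : IsCompact S) (hSne : S.Nonempty) :
    ∃ δ > 0, ∀ z, Disjoint (dyCube u z) S → ∀ p ∈ dyCube u z, δ ≤ infDist p S := by
  set U := ⋃ z ∈ {z | Disjoint (dyCube u z) S}, dyCube u z
  have hUS : Disjoint S U := disjoint_iUnion₂_right.mpr fun z hz => hz.symm
  obtain ⟨δ, hδ, hsep⟩ := hUS.exists_thickenings hS (isClosed_biUnion_dyCube u _)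
  exact ⟨δ, hδ, fun z hz p hp => not_lt.mp fun hlt =>
    hsep.notMem_of_mem_left ((mem_thickening_iff_infDist_lt hSne).mpr hlt)
      (self_subset_thickening hδ U (mem_biUnion hz hp))⟩

section dyApprox

variable {u : ℕ} {S T : Set (EuclideanSpace ℝ (Fin 3))} {r : ℝ}

lemma subset_dyApprox (hr : 0 ≤ r) : S ⊆ dyApprox u S r := fun x hx =>
  mem_biUnion ⟨x, mem_dyCube_floor u x, (infDist_zero_of_mem hx).trans_le hr⟩
    (mem_dyCube_floor u x)

lemma infDist_le_of_mem_dyApprox {x : EuclideanSpace ℝ (Fin 3)} (hx : x ∈ dyApprox u S r) :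
    infDist x S ≤ r + 2 * 2 ^ (-(u : ℤ)) := by
  simp only [dyApprox, mem_iUnion, mem_ofPred_eq, exists_prop] at hx
  obtain ⟨z, ⟨p, hp, hpS⟩, hx⟩ := hx
  calc infDist x S ≤ infDist p S + dist x p := infDist_le_infDist_add_dist
    _ ≤ r + 2 * 2 ^ (-(u : ℤ)) := add_le_add hpS (dist_le_of_mem_dyCube hx hp)

lemma hausdorffDist_dyApprox_le (hr : 0 ≤ r) :
    hausdorffDist (dyApprox u S r) S ≤ r + 2 * 2 ^ (-(u : ℤ)) :=
  hausdorffDist_le_of_infDist (by positivity) (fun _ => infDist_le_of_mem_dyApprox)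
    fun x hx => (infDist_zero_of_mem (subset_dyApprox hr hx)).trans_le (by positivity)

lemma dyApprox_eq_dyApproxLimit {δ : ℝ}
    (hδ : ∀ z, Disjoint (dyCube u z) S → ∀ p ∈ dyCube u z, δ ≤ infDist p S)
    (hTS : hausdorffEDist T S ≠ ⊤) (hr : hausdorffDist T S ≤ r)
    (hrδ : r + hausdorffDist T S < δ) : dyApprox u T r = dyApproxLimit u S := by
  unfold dyApprox dyApproxLimit
  congr! 3 with z
  constructor
  · rintro ⟨p, hp, hpT⟩
    refine not_disjoint_iff_nonempty_inter.mp fun hdisj => (hδ z hdisj p hp).not_gt ?_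
    linarith [infDist_le_infDist_add_hausdorffDist (x := p) hTS]
  · rintro ⟨x, hxz, hxS⟩
    refine ⟨x, hxz, le_trans ?_ hr⟩
    rw [hausdorffDist_comm]
    exact infDist_le_hausdorffDist_of_mem hxS (by rwa [hausdorffEDist_comm])

end dyApprox

theorem dyadic_approximation_stability_general (u : ℕ)
    (Sn : ℕ → Set (EuclideanSpace ℝ (Fin 3))) (S : Set (EuclideanSpace ℝ (Fin 3)))
    (hScomp : IsCompact S) (hSne : S.Nonempty)
    (hSncomp : ∀ n, IsCompact (Sn n)) (hSnne : ∀ n, (Sn n).Nonempty)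
    (hconv : Tendsto (fun n => Metric.hausdorffDist (Sn n) S) atTop (nhds 0)) :
    (∀ᶠ n in atTop,
      Sn n ⊆ dyApprox u (Sn n)
          (min ((2 : ℝ) ^ (-(2 * u : ℤ))) (2 * Metric.hausdorffDist (Sn n) S)) ∧
      Metric.hausdorffDist
          (dyApprox u (Sn n)
            (min ((2 : ℝ) ^ (-(2 * u : ℤ))) (2 * Metric.hausdorffDist (Sn n) S)))
          (Sn n) ≤ (2 : ℝ) ^ ((2 : ℤ) - u)) ∧
    (∃ N : ℕ, ∀ n ≥ N,
      dyApprox u (Sn n)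
          (min ((2 : ℝ) ^ (-(2 * u : ℤ))) (2 * Metric.hausdorffDist (Sn n) S)) =
        dyApproxLimit u S) := by
  set d : ℕ → ℝ := fun n => hausdorffDist (Sn n) S
  have hd : ∀ n, 0 ≤ d n := fun n => hausdorffDist_nonneg
  have hr : ∀ n, 0 ≤ min ((2 : ℝ) ^ (-(2 * u : ℤ))) (2 * d n) := fun n =>
    le_min (by positivity) (by linarith [hd n])
  have hscale : (2 : ℝ) ^ (-(2 * u : ℤ)) ≤ 2 ^ (-(u : ℤ)) :=
    zpow_le_zpow_right₀ one_le_two (by omega)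
  have hfour : (2 : ℝ) ^ ((2 : ℤ) - u) = 4 * 2 ^ (-(u : ℤ)) := by
    rw [sub_eq_add_neg, zpow_add₀ two_ne_zero]
    norm_num
  refine ⟨.of_forall fun n => ⟨subset_dyApprox (hr n), ?_⟩, ?_⟩
  · calc _ ≤ min ((2 : ℝ) ^ (-(2 * u : ℤ))) (2 * d n) + 2 * 2 ^ (-(u : ℤ)) :=
          hausdorffDist_dyApprox_le (hr n)
      _ ≤ (2 : ℝ) ^ ((2 : ℤ) - u) := by
          rw [hfour]
          linarith [min_le_left ((2 : ℝ) ^ (-(2 * u : ℤ))) (2 * d n),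
            zpow_pos (two_pos (α := ℝ)) (-(u : ℤ))]
  · obtain ⟨δ, hδ, hsep⟩ := exists_pos_le_infDist_of_disjoint_dyCube u hScomp hSne
    have hε : 0 < min ((2 : ℝ) ^ (-(2 * u : ℤ))) (δ / 3) :=
      lt_min (by positivity) (by positivity)
    obtain ⟨N, hN⟩ := eventually_atTop.mp (hconv.eventually (gt_mem_nhds hε))
    refine ⟨N, fun n hn => dyApprox_eq_dyApproxLimit hsep ?_ ?_ ?_⟩
    · exact hausdorffEDist_ne_top_of_nonempty_of_bounded (hSnne n) hSne (hSncomp n).isBounded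
        hScomp.isBounded
    · obtain ⟨hdu, -⟩ := lt_min_iff.mp (hN n hn)
      exact le_min hdu.le (by linarith [hd n])
    · obtain ⟨-, hdδ⟩ := lt_min_iff.mp (hN n hn)
      linarith [min_le_right ((2 : ℝ) ^ (-(2 * u : ℤ))) (2 * d n)]

/-- Stability of dyadic approximations. Let compact nonempty sets `Sₙ`
(contained in a fixed bounded box) converge to `S` in Hausdorff distance, with
`dₙ = d_H(Sₙ,S)`, and fix a scale `u`. Let `Aₙ` be the union of scale-`u` cubes within
distance `min(2^{−2u}, 2dₙ)` of `Sₙ`, and `A` the union of scale-`u` cubes meeting `S`.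
Then: (a) for `n` large, `Sₙ ⊆ Aₙ` and `d_H(Aₙ, Sₙ) ≤ 2^{−(u−2)}`; (b) the sequence
`(Aₙ)` is eventually constant, equal to `A`. -/
theorem dyadic_approximation_stability (u : ℕ) (Rbox : ℝ) (hR : 0 < Rbox)
    (Sn : ℕ → Set (EuclideanSpace ℝ (Fin 3))) (S : Set (EuclideanSpace ℝ (Fin 3)))
    (hScomp : IsCompact S) (hSne : S.Nonempty)
    (hSncomp : ∀ n, IsCompact (Sn n)) (hSnne : ∀ n, (Sn n).Nonempty)
    (hSsub : S ⊆ Metric.closedBall 0 Rbox) (hSnsub : ∀ n, Sn n ⊆ Metric.closedBall 0 Rbox)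
    (hconv : Tendsto (fun n => Metric.hausdorffDist (Sn n) S) atTop (nhds 0)) :
    (∀ᶠ n in atTop,
      Sn n ⊆ dyApprox u (Sn n)
          (min ((2 : ℝ) ^ (-(2 * u : ℤ))) (2 * Metric.hausdorffDist (Sn n) S)) ∧
      Metric.hausdorffDist
          (dyApprox u (Sn n)
            (min ((2 : ℝ) ^ (-(2 * u : ℤ))) (2 * Metric.hausdorffDist (Sn n) S)))
          (Sn n) ≤ (2 : ℝ) ^ ((2 : ℤ) - u)) ∧
    (∃ N : ℕ, ∀ n ≥ N,
      dyApprox u (Sn n)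
          (min ((2 : ℝ) ^ (-(2 * u : ℤ))) (2 * Metric.hausdorffDist (Sn n) S)) =
        dyApproxLimit u S) :=
  dyadic_approximation_stability_general u Sn S hScomp hSne hSncomp hSnne hconv
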